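/- arXiv:2109.00657 — 2 statements merged into one kernel-verified Lean document; each statement's English description precedes it below -/
import Mathlib

section
/- Let n ≥ 1 be an integer, let p be a real with 0 < p ≤ 1, let γ be a real with 0 ≤ γ ≤ 1/2 satisfying γ·(1/p − 1) ≤ 1/(2n), and set β = p/(2(1+γ)). Let π_1, …, π_n be nonnegative reals with ∑_{j=1}^n π_j = 1 and π_j ≥ 1/(n(1+γ)) for every j. Then for every integer i with 1 ≤ i ≤ n, S_c(i) ≥ S_β(i), where P_i = ∑_{j=1}^i π_j, S_c(i) = P_i + (1 − P_i)·p·(i/n), and S_β(i) = i/n + β·i·(n−i)/n². -/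
/-!
`S_c(i) = P_i (1 - p i/n) + p i/n` is nondecreasing in `P_i`, so for `i < n` it suffices to
check the inequality at the smallest admissible `P_i = i / (n (1 + γ))`, where the gap is an
explicit fraction whose sign is that of `p (n - i) - 2nγ(1 - p) ≥ p - 2nγ(1 - p) ≥ 0`.
For `i = n` both sides equal `1`.
-/

open Finset

/-- `S_c` with `x = i / n` and `P = P_i`. -/
def smqDeletionProb (p x P : ℝ) : ℝ := P + (1 - P) * p * x

/-- `S_β(i)`. -/
noncomputable def choiceDeletionProb (n β i : ℝ) : ℝ := i / n + β * i * (n - i) / n ^ 2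

theorem smqDeletionProb_one (p x : ℝ) : smqDeletionProb p x 1 = 1 := by
  simp [smqDeletionProb]

theorem smqDeletionProb_mono {p x : ℝ} (hpx : p * x ≤ 1) : Monotone (smqDeletionProb p x) := by
  intro P Q hPQ
  simp only [smqDeletionProb]
  nlinarith [mul_le_mul_of_nonneg_right hPQ (sub_nonneg.2 hpx)]

theorem choiceDeletionProb_self {n : ℝ} (hn : n ≠ 0) (β : ℝ) :
    choiceDeletionProb n β n = 1 := by
  simp [choiceDeletionProb, hn]

theorem two_mul_mul_one_sub_le_of_mul_one_div_sub_one_le {n p γ : ℝ} (hn : 0 < n) (hp : 0 < p)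
    (h : γ * (1 / p - 1) ≤ 1 / (2 * n)) : 2 * n * γ * (1 - p) ≤ p := by
  have h' := mul_le_mul_of_nonneg_left h (by positivity : (0 : ℝ) ≤ 2 * n * p)
  have hlhs : 2 * n * p * (γ * (1 / p - 1)) = 2 * n * γ * (1 - p) := by field_simp
  have hrhs : 2 * n * p * (1 / (2 * n)) = p := by field_simp
  rwa [hlhs, hrhs] at h'

/-- At the smallest admissible `P_i = i / (n(1 + γ))`, the gap `S_c(i) - S_β(i)` equals
`i (p (n - i) - 2nγ(1 - p)) / (2n²(1 + γ))`. -/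
theorem choiceDeletionProb_le_smqDeletionProb_of_lt {n i p γ : ℝ} (hn : 0 < n) (hi : 0 ≤ i)
    (hin : i + 1 ≤ n) (hp : 0 ≤ p) (hγ : 0 ≤ γ) (hcond : 2 * n * γ * (1 - p) ≤ p) :
    choiceDeletionProb n (p / (2 * (1 + γ))) i ≤
      smqDeletionProb p (i / n) (i / (n * (1 + γ))) := by
  have hgap : smqDeletionProb p (i / n) (i / (n * (1 + γ)))
      - choiceDeletionProb n (p / (2 * (1 + γ))) i
      = i * (p * (n - i) - 2 * n * γ * (1 - p)) / (2 * n ^ 2 * (1 + γ)) := by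
    unfold smqDeletionProb choiceDeletionProb
    field_simp
    ring
  rw [← sub_nonneg, hgap]
  exact div_nonneg (mul_nonneg hi (by nlinarith)) (by positivity)

theorem mul_le_sum_Icc_of_le {π : ℕ → ℝ} {n i : ℕ} {c : ℝ} (hin : i ≤ n)
    (hπ : ∀ j ∈ Icc 1 n, π j ≥ c) : i * c ≤ ∑ j ∈ Icc 1 i, π j := by
  simpa using card_nsmul_le_sum (Icc 1 i) π c fun j hj ↦ hπ j (Icc_subset_Icc_right hin hj)

theorem smq_deletion_prob_comparison_general
    (n : ℕ) (p γ : ℝ) (hp0 : 0 < p) (hp1 : p ≤ 1)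
    (hγ0 : 0 ≤ γ)
    (hcond : γ * (1 / p - 1) ≤ 1 / (2 * n))
    (β : ℝ) (hβ : β = p / (2 * (1 + γ)))
    (π : ℕ → ℝ)
    (hπsum : ∑ j ∈ Finset.Icc 1 n, π j = 1)
    (hπlb : ∀ j ∈ Finset.Icc 1 n, π j ≥ 1 / (n * (1 + γ))) :
    ∀ i : ℕ, 1 ≤ i → i ≤ n →
      (∑ j ∈ Finset.Icc 1 i, π j) + (1 - ∑ j ∈ Finset.Icc 1 i, π j) * p * (i / n)
        ≥ i / n + β * i * ((n : ℝ) - i) / (n : ℝ) ^ 2 := by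
  intro i hi hin
  show choiceDeletionProb n β i ≤ smqDeletionProb p (i / n) (∑ j ∈ Icc 1 i, π j)
  have hn : (0 : ℝ) < n := by exact_mod_cast hi.trans hin
  rcases hin.eq_or_lt with rfl | hlt
  · rw [choiceDeletionProb_self hn.ne', hπsum, smqDeletionProb_one]
  have hPi := mul_le_sum_Icc_of_le hin hπlb
  rw [mul_one_div] at hPi
  calc choiceDeletionProb n β i
      ≤ smqDeletionProb p (i / n) (i / (n * (1 + γ))) := by
        subst hβ
        refine choiceDeletionProb_le_smqDeletionProb_of_lt hn i.cast_nonneg ?_ hp0.le hγ0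
          (two_mul_mul_one_sub_le_of_mul_one_div_sub_one_le hn hp0 hcond)
        exact_mod_cast hlt
    _ ≤ smqDeletionProb p (i / n) (∑ j ∈ Icc 1 i, π j) := by
        refine smqDeletionProb_mono ?_ hPi
        have : (i : ℝ) / n ≤ 1 := div_le_one_of_le₀ (by exact_mod_cast hin) hn.le
        nlinarith [i.cast_nonneg (α := ℝ)]

/-- Lemma (majorpr): comparison of deletion probabilities between the SMQ
continuous process and the (1+β)-choice process. -/
theorem smq_deletion_prob_comparison
    (n : ℕ) (hn : 1 ≤ n) (p γ : ℝ) (hp0 : 0 < p) (hp1 : p ≤ 1)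
    (hγ0 : 0 ≤ γ) (hγhalf : γ ≤ 1 / 2)
    (hcond : γ * (1 / p - 1) ≤ 1 / (2 * n))
    (β : ℝ) (hβ : β = p / (2 * (1 + γ)))
    (π : ℕ → ℝ) (hπnonneg : ∀ j, 0 ≤ π j)
    (hπsum : ∑ j ∈ Finset.Icc 1 n, π j = 1)
    (hπlb : ∀ j ∈ Finset.Icc 1 n, π j ≥ 1 / (n * (1 + γ))) :
    ∀ i : ℕ, 1 ≤ i → i ≤ n →
      (∑ j ∈ Finset.Icc 1 i, π j) + (1 - ∑ j ∈ Finset.Icc 1 i, π j) * p * (i / n)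
        ≥ i / n + β * i * ((n : ℝ) - i) / (n : ℝ) ^ 2 :=
  smq_deletion_prob_comparison_general n p γ hp0 hp1 hγ0 hcond β hβ π hπsum hπlb
end

section
/- Let n ≥ 1 be an integer, let x ∈ ℝⁿ be a vector of reals, let α ≥ 0 and w ≥ 0 be reals, and let i, j be indices with x_i ≤ x_j. For any vector y ∈ ℝⁿ define Γ(y) = ∑_{k=1}^n [exp(−α·(y_k − ȳ)) + exp(α·(y_k − ȳ))], where ȳ = (1/n)·∑_{k=1}^n y_k. Then Γ(x + w·e_i) ≤ Γ(x + w·e_j), where e_i, e_j denote the standard basis vectors (i.e., adding the increment w to the smaller-valued coordinate yields a smaller potential than adding it to the larger-valued coordinate). -/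
open Finset

/-- The exponential potential Γ(y) = ∑_k [exp(−α(y_k − ȳ)) + exp(α(y_k − ȳ))],
where ȳ is the average of the coordinates of y. -/
noncomputable def smqPotential (n : ℕ) (α : ℝ) (y : Fin n → ℝ) : ℝ :=
  ∑ k : Fin n,
    (Real.exp (-(α * (y k - (∑ l : Fin n, y l) / n)))
      + Real.exp (α * (y k - (∑ l : Fin n, y l) / n)))

private lemma exp_swap (u v c : ℝ) (huv : u ≤ v) (hc : 0 ≤ c) :
    Real.exp (u + c) + Real.exp v ≤ Real.exp u + Real.exp (v + c) := by
  have h1 : Real.exp u ≤ Real.exp v := Real.exp_le_exp.2 huv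
  have h2 : (1 : ℝ) ≤ Real.exp c := Real.one_le_exp hc
  rw [Real.exp_add, Real.exp_add]
  nlinarith [Real.exp_pos u, Real.exp_pos v]

private lemma sum_add_single (n : ℕ) (x : Fin n → ℝ) (w : ℝ) (i : Fin n) :
    (∑ l : Fin n, (x + w • (Pi.single i 1 : Fin n → ℝ)) l) = (∑ l : Fin n, x l) + w := by
  simp [Finset.sum_add_distrib, ← Finset.mul_sum, Finset.sum_pi_single']

private lemma sum_comp_single (n : ℕ) (F : ℝ → ℝ) (x : Fin n → ℝ) (w : ℝ) (i : Fin n) :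
    (∑ k : Fin n, F ((x + w • (Pi.single i 1 : Fin n → ℝ)) k))
      = (∑ k : Fin n, F (x k)) + (F (x i + w) - F (x i)) := by
  have hz : ∀ k : Fin n, k ≠ i → (x + w • (Pi.single i 1 : Fin n → ℝ)) k = x k := by
    intro k hk; simp [Pi.single_apply, hk]
  have hzi : (x + w • (Pi.single i 1 : Fin n → ℝ)) i = x i + w := by simp
  have key : ∑ k : Fin n, (F ((x + w • (Pi.single i 1 : Fin n → ℝ)) k) - F (x k))
      = F (x i + w) - F (x i) := by
    rw [Finset.sum_eq_single i]
    · rw [hzi]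
    · intro k _ hk; rw [hz k hk]; ring
    · intro h; exact absurd (Finset.mem_univ i) h
  rw [Finset.sum_sub_distrib] at key
  linarith

/-- Deterministic core of the potential-coupling lemma: adding the increment w
to a smaller-valued coordinate yields a smaller potential. -/
theorem smq_potential_coupling
    (n : ℕ) (hn : 1 ≤ n) (x : Fin n → ℝ) (α w : ℝ) (hα : 0 ≤ α) (hw : 0 ≤ w)
    (i j : Fin n) (hij : x i ≤ x j) :
    smqPotential n α (x + w • (Pi.single i 1 : Fin n → ℝ))
      ≤ smqPotential n α (x + w • (Pi.single j 1 : Fin n → ℝ)) := by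
  set m : ℝ := ((∑ l : Fin n, x l) + w) / n with hm
  set F : ℝ → ℝ := fun t => Real.exp (-(α * (t - m))) + Real.exp (α * (t - m)) with hF
  have hpot : ∀ k : Fin n, smqPotential n α (x + w • (Pi.single k 1 : Fin n → ℝ))
      = (∑ l : Fin n, F (x l)) + (F (x k + w) - F (x k)) := by
    intro k
    unfold smqPotential
    rw [sum_add_single, ← hm]
    exact sum_comp_single n F x w k
  rw [hpot i, hpot j]
  have hc : 0 ≤ α * w := mul_nonneg hα hw
  have e1 : Real.exp (α * (x i - m) + α * w) + Real.exp (α * (x j - m))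
      ≤ Real.exp (α * (x i - m)) + Real.exp (α * (x j - m) + α * w) :=
    exp_swap _ _ _ (by nlinarith) hc
  have e2 : Real.exp (-(α * (x j + w - m)) + α * w) + Real.exp (-(α * (x i + w - m)))
      ≤ Real.exp (-(α * (x j + w - m))) + Real.exp (-(α * (x i + w - m)) + α * w) :=
    exp_swap _ _ _ (by nlinarith) hc
  have r1 : α * (x i - m) + α * w = α * (x i + w - m) := by ring
  have r2 : α * (x j - m) + α * w = α * (x j + w - m) := by ring
  have r3 : -(α * (x j + w - m)) + α * w = -(α * (x j - m)) := by ring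
  have r4 : -(α * (x i + w - m)) + α * w = -(α * (x i - m)) := by ring
  rw [r1, r2] at e1
  rw [r3, r4] at e2
  simp only [hF]
  linarith
end
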